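/- arXiv:1812.00359 — 12 statements merged into one kernel-verified Lean document; each statement's English description precedes it below -/
import Mathlib

section
/- Let u be a string with period length p. If v is a substring of u of length at least p, and v has a period of length q dividing p, then u also has a period of length q. -/
/-- `w` has a period of length `p`: `1 ≤ p ≤ |w|` and `w[i] = w[i+p]`
for all valid indices. -/
def ListHasPeriod {α : Type*} (w : List α) (p : ℕ) : Prop :=
  1 ≤ p ∧ p ≤ w.length ∧ ∀ i, i + p < w.length → w[i]? = w[i + p]?

private lemma per_steps {α : Type*} {w : List α} {p : ℕ} (h : ListHasPeriod w p) :
    ∀ i k, i + k * p < w.length → w[i]? = w[i + k * p]? := by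
  intro i k
  induction k with
  | zero => simp
  | succ k ih =>
    intro hlt
    have hkp : i + (k+1) * p = i + k * p + p := by ring
    rw [hkp] at hlt ⊢
    have h1 : 1 ≤ p := h.1
    rw [ih (by omega)]
    exact h.2.2 (i + k * p) hlt

private lemma per_mod {α : Type*} {w : List α} {p : ℕ} (h : ListHasPeriod w p)
    {i j : ℕ} (hij : i ≤ j) (hj : j < w.length) (hmod : i % p = j % p) :
    w[i]? = w[j]? := by
  have hp1 : 1 ≤ p := h.1
  have hdvd : p ∣ (j - i) := (Nat.modEq_iff_dvd' hij).mp hmod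
  obtain ⟨k, hk⟩ := hdvd
  have hk' : j - i = k * p := by rw [hk, Nat.mul_comm]
  have hj' : j = i + k * p := by omega
  rw [hj']
  exact per_steps h i k (by omega)

/-- If `u` has period length `p`, `v` is a substring of `u` of length at
least `p`, and `v` has a period of length `q` dividing `p`, then `u` also
has a period of length `q`. -/
theorem period_of_substring_period {α : Type*} (u v : List α) (p q : ℕ)
    (hp : ListHasPeriod u p) (hsub : v.IsInfix u) (hlen : p ≤ v.length)
    (hq : ListHasPeriod v q) (hdvd : q ∣ p) :
    ListHasPeriod u q := by
  obtain ⟨s, t, hst⟩ := hsub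
  set x := s.length with hx
  set m := v.length with hm
  have hulen : u.length = x + m + t.length := by
    rw [← hst]; simp [hx, hm]; omega
  have hq1 : 1 ≤ q := hq.1
  have hqm : q ≤ m := hq.2.1
  have hp1 : 1 ≤ p := hp.1
  have hqp : q ≤ p := Nat.le_of_dvd (by omega) hdvd
  -- v is fully q-periodic
  have hvfull : ∀ k, k < m → v[k]? = v[k % q]? := by
    intro k hk
    have hmd : k % q + (k / q) * q = k := by
      rw [Nat.mul_comm]; exact Nat.mod_add_div k q
    have := per_steps hq (k % q) (k / q) (by omega)
    rw [this, hmd]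
  -- u[x+j]? = v[j]? for j < m
  have huv : ∀ j, j < m → u[x + j]? = v[j]? := by
    intro j hj
    rw [← hst]
    rw [List.getElem?_append_left (show x + j < (s ++ v).length by simp [hx, hm] at *; omega)]
    rw [List.getElem?_append_right (by omega)]
    congr 1
    omega
  -- the key: for any valid n, u[n]? = v[(n + x*p - x) % q]?
  have key : ∀ n, n < u.length → u[n]? = v[(n + x * p - x) % q]? := by
    intro n hn
    set A := n + x * p - x with hA
    have hxA : x + A = n + x * p := by
      have : x ≤ x * p := Nat.le_mul_of_pos_right x (by omega)
      omega
    have hjp : A % p < p := Nat.mod_lt _ (by omega)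
    have hmodp : (x + A % p) % p = n % p := by
      have h1 : (x + A % p) % p = (x + A) % p := by
        conv_lhs => rw [Nat.add_mod, Nat.mod_mod_of_dvd A (dvd_refl p)]
        conv_rhs => rw [Nat.add_mod]
      rw [h1, hxA, Nat.add_mul_mod_self_right]
    have hxj : x + A % p < u.length := by omega
    have step1 : u[n]? = u[x + A % p]? := by
      rcases le_total n (x + A % p) with h | h
      · exact per_mod hp h hxj hmodp.symm
      · exact (per_mod hp h hn hmodp).symm
    rw [step1, huv _ (by omega), hvfull _ (by omega),
      Nat.mod_mod_of_dvd A hdvd]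
  refine ⟨hq1, by omega, ?_⟩
  intro i hiq
  rw [key i (by omega), key (i + q) hiq]
  congr 1
  have h1 : i + q + x * p - x = (i + x * p - x) + q := by
    have : x ≤ x * p := Nat.le_mul_of_pos_right x (by omega)
    omega
  rw [h1, Nat.add_mod_right]
end

section
/- Let u and v be two strings of equal length |u| = |v| ≥ 2t for some natural number t, such that the shortest period of u has length at most t and the shortest period of v has length at most t. If the prefixes of length 2t of u and v coincide (u[1..2t] = v[1..2t]), then u = v. -/
/-- If `u` and `v` are strings of equal length at least `2t` whose shortest
periods both have length at most `t`, and their prefixes of length `2t`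
coincide, then `u = v`. -/
theorem eq_of_periodic_prefix_eq {α : Type*} (u v : List α) (t : ℕ)
    (hlen : u.length = v.length) (h2t : 2 * t ≤ u.length)
    (hu : ∃ p ≤ t, ListHasPeriod u p) (hv : ∃ p ≤ t, ListHasPeriod v p)
    (hpre : u.take (2 * t) = v.take (2 * t)) :
    u = v := by
  obtain ⟨p, hpt, hp1, hpl, hpmem⟩ := hu
  obtain ⟨q, hqt, hq1, hql, hqmem⟩ := hv
  apply List.ext_getElem?
  intro i
  induction i using Nat.strong_induction_on with
  | _ i ih =>
    by_cases hi : i < 2 * t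
    · have h := congrArg (fun l => l[i]?) hpre
      simpa [List.getElem?_take, hi] using h
    · push_neg at hi
      by_cases hil : i < u.length
      · have hp0 : 1 ≤ p := hp1
        have hq0 : 1 ≤ q := hq1
        have e1 : u[i - p]? = u[i]? := by
          have := hpmem (i - p) (by omega)
          rwa [show i - p + p = i by omega] at this
        have e2 : v[i - p - q]? = v[i - p]? := by
          have := hqmem (i - p - q) (by omega)
          rwa [show i - p - q + q = i - p by omega] at this
        have e3 : u[i - p - q]? = u[i - q]? := by
          have := hpmem (i - p - q) (by omega)
          rwa [show i - p - q + p = i - q by omega] at this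
        have e4 : v[i - q]? = v[i]? := by
          have := hqmem (i - q) (by omega)
          rwa [show i - q + q = i by omega] at this
        calc u[i]? = u[i - p]? := e1.symm
          _ = v[i - p]? := ih (i - p) (by omega)
          _ = v[i - p - q]? := e2.symm
          _ = u[i - p - q]? := (ih (i - p - q) (by omega)).symm
          _ = u[i - q]? := e3
          _ = v[i - q]? := ih (i - q) (by omega)
          _ = v[i]? := e4
      · push_neg at hil
        rw [List.getElem?_eq_none hil, List.getElem?_eq_none (hlen ▸ hil)]
end

section
/- Under the assumptions of the previous context, if u and v are strings of equal length at least 2t whose shortest periods both have length at most t and whose length-2t prefixes agree, then the shortest period lengths of u and v are equal. -/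
lemma listHasPeriod_mul {α : Type*} {w : List α} {p : ℕ} (h : ListHasPeriod w p) :
    ∀ k i, i + k * p < w.length → w[i]? = w[i + k * p]? := by
  intro k
  induction k with
  | zero => intro i _; simp
  | succ k ih =>
    intro i hi
    have h1 : i + k * p < w.length := by
      have : k * p ≤ (k + 1) * p := Nat.mul_le_mul_right p (Nat.le_succ k)
      omega
    have h2 := h.2.2 (i + k * p) (by rw [Nat.succ_mul] at hi; omega)
    rw [ih i h1, h2]
    congr 1
    ring

lemma period_transfer {α : Type*} (u v : List α) (t p q : ℕ)
    (hlen : u.length = v.length) (h2t : 2 * t ≤ u.length)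
    (hp : ListHasPeriod u p) (hq : ListHasPeriod v q)
    (hpt : p ≤ t) (hqt : q ≤ t)
    (hpre : u.take (2 * t) = v.take (2 * t)) : ListHasPeriod v p := by
  obtain ⟨hp1, hp2, hp3⟩ := hp
  obtain ⟨hq1, hq2, hq3⟩ := hq
  refine ⟨hp1, by omega, ?_⟩
  intro i hi
  set r := i % q with hr
  set k := i / q with hk
  have hiq : i = r + k * q := by
    have hdm := Nat.div_add_mod i q
    rw [Nat.mul_comm] at hdm
    rw [hr, hk]
    omega
  have hrq : r < q := Nat.mod_lt i (by omega)
  have e1 : v[r]? = v[i]? := by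
    have := listHasPeriod_mul ⟨hq1, hq2, hq3⟩ k r (by omega)
    rw [this]; congr 1; omega
  have e2 : v[r + p]? = v[i + p]? := by
    have := listHasPeriod_mul ⟨hq1, hq2, hq3⟩ k (r + p) (by omega)
    rw [this]; congr 1; omega
  have hpref : ∀ j, j < 2 * t → u[j]? = v[j]? := by
    intro j hj
    have h1 : (u.take (2 * t))[j]? = u[j]? := List.getElem?_take_of_lt hj
    have h2 : (v.take (2 * t))[j]? = v[j]? := List.getElem?_take_of_lt hj
    rw [← h1, ← h2, hpre]
  have e3 : v[r]? = v[r + p]? := by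
    rw [← hpref r (by omega), ← hpref (r + p) (by omega)]
    exact hp3 r (by omega)
  rw [← e1, ← e2, e3]

/-- If `u` and `v` are strings of equal length at least `2t` whose shortest
(principal) periods `ρu`, `ρv` both have length at most `t`, and their
length-`2t` prefixes agree, then `ρu = ρv`. -/
theorem principal_periods_eq {α : Type*} (u v : List α) (t ρu ρv : ℕ)
    (hlen : u.length = v.length) (h2t : 2 * t ≤ u.length)
    (hρu : IsLeast {p | ListHasPeriod u p} ρu)
    (hρv : IsLeast {p | ListHasPeriod v p} ρv)
    (hut : ρu ≤ t) (hvt : ρv ≤ t)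
    (hpre : u.take (2 * t) = v.take (2 * t)) :
    ρu = ρv := by
  have h1 : ListHasPeriod v ρu :=
    period_transfer u v t ρu ρv hlen h2t hρu.1 hρv.1 hut hvt hpre
  have h2 : ListHasPeriod u ρv :=
    period_transfer v u t ρv ρu hlen.symm (hlen ▸ h2t) hρv.1 hρu.1 hvt hut hpre.symm
  exact le_antisymm (hρu.2 h2) (hρv.2 h1)
end

section
/- If u = S[i..j] and v = S[i'..j'] are two distinct overlapping (τ, τ/6)-runs of a string S with i ≤ i' ≤ j, then the overlap length j - i' + 1 is strictly less than τ/3. -/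
/-- `S[k] = S[k+p]` for all positions `k` with `a ≤ k` and `k + p ≤ b`,
i.e. `p` is a period of the substring `S[a..b]`. -/
def HasPeriodOn {α : Type*} (S : ℕ → α) (a b p : ℕ) : Prop :=
  ∀ k, a ≤ k → k + p ≤ b → S k = S (k + p)

/-- `S[i..j]` is a maximal periodic substring of the length-`n` string `S`
with principal (shortest) period length `ρ`: the periodicity cannot be
extended to the left nor to the right. -/
def IsRun {α : Type*} (S : ℕ → α) (n i j ρ : ℕ) : Prop :=
  1 ≤ i ∧ i ≤ j ∧ j ≤ n ∧
  IsLeast {p | 1 ≤ p ∧ p ≤ j - i + 1 ∧ HasPeriodOn S i j p} ρ ∧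
  (2 ≤ i → S (i - 1) ≠ S (i - 1 + ρ)) ∧
  (j + 1 ≤ n → S (j + 1) ≠ S (j + 1 - ρ))

/-- If a position `k ≥ a'` satisfies `k + g ≤ b`, then `S k = S (k + g)`:
shift `k` down by multiples of `p` into the window `[a', b']` where `g` is
known to be a period. -/
private lemma extend_from_right {α : Type*} {S : ℕ → α} {a b a' b' p g : ℕ}
    (hP : HasPeriodOn S a b p) (hG : HasPeriodOn S a' b' g)
    (haa : a ≤ a') (hbb : b' ≤ b) (hp : 1 ≤ p) (hlen : a' + p + g ≤ b' + 1) :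
    ∀ k, a' ≤ k → k + g ≤ b → S k = S (k + g) := by
  intro k
  induction k using Nat.strong_induction_on with
  | _ k ih =>
    intro hk hkb
    by_cases hcase : k + g ≤ b'
    · exact hG k hk hcase
    · have hk2 : a' + p ≤ k := by omega
      have e1 : S (k - p) = S k := by
        have h := hP (k - p) (by omega) (by omega)
        rwa [Nat.sub_add_cancel (by omega)] at h
      have e2 : S (k - p) = S (k - p + g) := ih (k - p) (by omega) (by omega) (by omega)
      have e3 : S (k - p + g) = S (k + g) := by
        have h := hP (k - p + g) (by omega) (by omega)
        rwa [show k - p + g + p = k + g by omega] at h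
      rw [← e1, e2, e3]

/-- General version: shift `k` up by multiples of `p` if it lies below the
window. -/
private lemma extend_aux {α : Type*} {S : ℕ → α} {a b a' b' p g : ℕ}
    (hP : HasPeriodOn S a b p) (hG : HasPeriodOn S a' b' g)
    (haa : a ≤ a') (hbb : b' ≤ b) (hp : 1 ≤ p) (hlen : a' + p + g ≤ b' + 1) :
    ∀ m k, a ≤ k → a' ≤ k + m → k + g ≤ b → S k = S (k + g) := by
  intro m
  induction m with
  | zero =>
    intro k hk hk' hkb
    exact extend_from_right hP hG haa hbb hp hlen k (by omega) hkb
  | succ m ih =>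
    intro k hk hk' hkb
    by_cases hcase : a' ≤ k
    · exact extend_from_right hP hG haa hbb hp hlen k hcase hkb
    · have hkb2 : k + p + g ≤ b' := by omega
      have e1 : S k = S (k + p) := hP k hk (by omega)
      have e2 : S (k + p) = S (k + p + g) := ih (k + p) (by omega) (by omega) (by omega)
      have e3 : S (k + g) = S (k + g + p) := hP (k + g) (by omega) (by omega)
      rw [e1, e2, show k + p + g = k + g + p by omega]
      exact e3.symm

/-- If `S` has period `p` on `[a,b]` and period `g` on a subwindow `[a',b']`
of length at least `p + g`, then `g` is a period on all of `[a,b]`. -/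
private lemma period_extend {α : Type*} {S : ℕ → α} {a b a' b' p g : ℕ}
    (hP : HasPeriodOn S a b p) (hG : HasPeriodOn S a' b' g)
    (haa : a ≤ a') (hbb : b' ≤ b) (hp : 1 ≤ p) (hlen : a' + p + g ≤ b' + 1) :
    HasPeriodOn S a b g := by
  intro k hk hkb
  exact extend_aux hP hG haa hbb hp hlen a' k hk (by omega) hkb

/-- If `u = S[i..j]` and `v = S[i'..j']` are two distinct overlapping
`(τ, τ/6)`-runs (length at least `τ`, principal period at most `τ/6`) with
`i ≤ i' ≤ j`, then the overlap length `j - i' + 1` is strictly less than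
`τ/3`. -/
theorem overlap_lt_third {α : Type*} (S : ℕ → α) (n τ i j i' j' ρ ρ' : ℕ)
    (hu : IsRun S n i j ρ) (hv : IsRun S n i' j' ρ')
    (hulen : τ ≤ j - i + 1) (huρ : 6 * ρ ≤ τ)
    (hvlen : τ ≤ j' - i' + 1) (hvρ : 6 * ρ' ≤ τ)
    (hov₁ : i ≤ i') (hov₂ : i' ≤ j)
    (hne : ¬(i = i' ∧ j = j')) :
    3 * (j - i' + 1) < τ := by
  by_contra hcon
  push_neg at hcon
  obtain ⟨hi1, hij, hjn, ⟨⟨hρ1, hρle, hper⟩, hmin⟩, hleft, hright⟩ := hu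
  obtain ⟨hi1', hij', hjn', ⟨⟨hρ1', hρle', hper'⟩, hmin'⟩, hleft', hright'⟩ := hv
  -- both periods hold on the overlap window [i', min j j']
  have hm1 : HasPeriodOn S i' (min j j') ρ := fun k hk hkb => hper k (by omega) (by omega)
  have hm2 : HasPeriodOn S i' (min j j') ρ' := fun k hk hkb => hper' k hk (by omega)
  have hwin : i' + ρ + ρ' ≤ min j j' + 1 := by omega
  -- ρ' extends to a period of u, hence ρ ≤ ρ'
  have hρ'onU : HasPeriodOn S i j ρ' :=
    period_extend hper hm2 hov₁ (min_le_left j j') hρ1 hwin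
  have h1 : ρ ≤ ρ' := hmin ⟨hρ1', by omega, hρ'onU⟩
  -- ρ extends to a period of v, hence ρ' ≤ ρ
  have hρonV : HasPeriodOn S i' j' ρ :=
    period_extend hper' hm1 le_rfl (min_le_right j j') hρ1' (by omega)
  have h2 : ρ' ≤ ρ := hmin' ⟨hρ1, by omega, hρonV⟩
  have hρρ : ρ = ρ' := le_antisymm h1 h2
  -- left maximality of v forces i = i'
  have hii : i = i' := by
    by_contra hne2
    have h2i : 2 ≤ i' := by omega
    refine hleft' h2i ?_
    have h := hper (i' - 1) (by omega) (by omega)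
    rwa [hρρ] at h
  -- right maximality of u forces j' ≤ j
  have hjj : j' ≤ j := by
    by_contra h3
    push_neg at h3
    refine hright (by omega) ?_
    have h := hper' (j + 1 - ρ) (by omega) (by omega)
    rw [show j + 1 - ρ + ρ' = j + 1 by omega] at h
    exact h.symm
  -- right maximality of v forces j = j'
  have hjj2 : j = j' := by
    rcases eq_or_lt_of_le hjj with h4 | h4
    · exact h4.symm
    · exfalso
      refine hright' (by omega) ?_
      have h := hper (j' + 1 - ρ') (by omega) (by omega)
      rw [show j' + 1 - ρ' + ρ = j' + 1 by omega] at h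
      exact h.symm
  exact hne ⟨hii, hjj2⟩
end

section
/- An interval of positions may be fully contained in at most one (τ, τ/6)-run: if an interval I of length τ/2 is fully contained in two (τ, τ/6)-runs u and v of a string S, then u = v. -/
lemma hasPeriodOn_iterate {α : Type*} {S : ℕ → α} {c d q : ℕ}
    (h : HasPeriodOn S c d q) :
    ∀ m k, c ≤ k → k + m * q ≤ d → S k = S (k + m * q) := by
  intro m
  induction m with
  | zero => intro k _ _; simp
  | succ m ih =>
    intro k hck hkd
    have h1 : S k = S (k + q) := h k hck (by nlinarith [Nat.zero_le (m * q)])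
    have h2 : S (k + q) = S (k + q + m * q) := by
      refine ih (k + q) (by omega) (by nlinarith)
    rw [h1, h2]
    congr 1
    ring

lemma hasPeriodOn_congr {α : Type*} {S : ℕ → α} {c d q : ℕ}
    (h : HasPeriodOn S c d q) {x y : ℕ} (hcx : c ≤ x) (hcy : c ≤ y)
    (hxd : x ≤ d) (hyd : y ≤ d) (hmod : x % q = y % q) : S x = S y := by
  rcases le_total x y with hxy | hxy
  · obtain ⟨m, hm⟩ := (Nat.modEq_iff_dvd' hxy).mp hmod
    have hy : y = x + m * q := by rw [Nat.mul_comm]; omega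
    rw [hy] at hyd ⊢
    exact hasPeriodOn_iterate h m x hcx hyd
  · obtain ⟨m, hm⟩ := (Nat.modEq_iff_dvd' hxy).mp hmod.symm
    have hx : x = y + m * q := by rw [Nat.mul_comm]; omega
    rw [hx] at hxd ⊢
    exact (hasPeriodOn_iterate h m y hcy hxd).symm

/-- Propagation: if `q` is a period of `S[c..d]` and `p` is a period of a
subinterval `S[A..B]` of length at least `p + q`, then `p` is a period of all
of `S[c..d]`. -/
lemma hasPeriodOn_propagate {α : Type*} {S : ℕ → α} {c d A B p q : ℕ}
    (hq : 1 ≤ q) (hcA : c ≤ A) (hBd : B ≤ d) (hlen : A + q + p ≤ B + 1)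
    (hbig : HasPeriodOn S c d q) (hsmall : HasPeriodOn S A B p) :
    HasPeriodOn S c d p := by
  intro k hck hkd
  set K := k + q * A with hK
  have hAK : A ≤ K := by
    have : A ≤ q * A := Nat.le_mul_of_pos_left A hq
    omega
  set k' := A + (K - A) % q with hk'
  have hrlt : (K - A) % q < q := Nat.mod_lt _ hq
  have hmodK : k' % q = K % q := by
    have h1 : k' ≡ A + (K - A) [MOD q] := Nat.ModEq.add_left A (Nat.mod_modEq _ q)
    have h2 : A + (K - A) = K := by omega
    rw [h2] at h1
    exact h1
  have hmodk : k' % q = k % q := by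
    rw [hmodK, hK]
    exact Nat.add_mul_mod_self_left k q A
  have hk'B : k' + p ≤ B := by omega
  have hck' : c ≤ k' := by omega
  have e1 : S k = S k' := hasPeriodOn_congr hbig hck hck' (by omega) (by omega) hmodk.symm
  have e2 : S (k + p) = S (k' + p) := by
    refine hasPeriodOn_congr hbig (by omega) (by omega) hkd (by omega) ?_
    rw [Nat.add_mod, Nat.add_mod k' p, hmodk]
  rw [e1, e2]
  exact hsmall k' (by omega) hk'B

/-- An interval of length `τ/2` may be fully contained in at most one
`(τ, τ/6)`-run: if the interval `[a..b]` (with `b - a + 1 = τ/2`) is fully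
contained in the `(τ, τ/6)`-runs `S[i..j]` and `S[i'..j']`, then the two
runs coincide. -/
theorem run_containing_interval_unique {α : Type*}
    (S : ℕ → α) (n τ i j i' j' ρ ρ' a b : ℕ)
    (hu : IsRun S n i j ρ) (hv : IsRun S n i' j' ρ')
    (hulen : τ ≤ j - i + 1) (huρ : 6 * ρ ≤ τ)
    (hvlen : τ ≤ j' - i' + 1) (hvρ : 6 * ρ' ≤ τ)
    (hab : a ≤ b) (hlen : 2 * (b - a + 1) = τ)
    (hIu : i ≤ a ∧ b ≤ j) (hIv : i' ≤ a ∧ b ≤ j') :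
    i = i' ∧ j = j' := by
  obtain ⟨hi1, hij, hjn, huL, huml, humr⟩ := hu
  obtain ⟨hi'1, hij', hj'n, hvL, hvml, hvmr⟩ := hv
  obtain ⟨⟨hρ1, hρle, hρper⟩, huleast⟩ := huL
  obtain ⟨⟨hρ'1, hρ'le, hρ'per⟩, hvleast⟩ := hvL
  obtain ⟨hia, hbj⟩ := hIu
  obtain ⟨hi'a, hbj'⟩ := hIv
  -- both periods hold on [a, b]
  have hu_ab : HasPeriodOn S a b ρ := fun k hk hk2 =>
    hρper k (le_trans hia hk) (le_trans hk2 hbj)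
  have hv_ab : HasPeriodOn S a b ρ' := fun k hk hk2 =>
    hρ'per k (le_trans hi'a hk) (le_trans hk2 hbj')
  -- the two minimal periods coincide
  have hρonv : HasPeriodOn S i' j' ρ :=
    hasPeriodOn_propagate hρ'1 hi'a hbj' (by omega) hρ'per hu_ab
  have hρonu : HasPeriodOn S i j ρ' :=
    hasPeriodOn_propagate hρ1 hia hbj (by omega) hρper hv_ab
  have h1 : ρ' ≤ ρ := hvleast ⟨hρ1, by omega, hρonv⟩
  have h2 : ρ ≤ ρ' := huleast ⟨hρ'1, by omega, hρonu⟩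
  have hρρ : ρ' = ρ := le_antisymm h1 h2
  rw [hρρ] at hρ'per hvml hvmr
  have hρb : 3 * ρ ≤ b - a + 1 := by omega
  constructor
  · refine le_antisymm ?_ ?_
    · by_contra hlt
      push_neg at hlt
      have : S (i - 1) = S (i - 1 + ρ) :=
        hρ'per (i - 1) (by omega) (by omega)
      exact huml (by omega) this
    · by_contra hlt
      push_neg at hlt
      have : S (i' - 1) = S (i' - 1 + ρ) :=
        hρper (i' - 1) (by omega) (by omega)
      exact hvml (by omega) this
  · refine le_antisymm ?_ ?_
    · by_contra hlt
      push_neg at hlt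
      have heq : S (j' + 1 - ρ) = S (j' + 1 - ρ + ρ) :=
        hρper (j' + 1 - ρ) (by omega) (by omega)
      have heq2 : j' + 1 - ρ + ρ = j' + 1 := by omega
      rw [heq2] at heq
      exact hvmr (by omega) heq.symm
    · by_contra hlt
      push_neg at hlt
      have heq : S (j + 1 - ρ) = S (j + 1 - ρ + ρ) :=
        hρ'per (j + 1 - ρ) (by omega) (by omega)
      have heq2 : j + 1 - ρ + ρ = j + 1 := by omega
      rw [heq2] at heq
      exact humr (by omega) heq.symm
end

section
/- Let S' = S[i..j] be a substring of S that is periodic with principal period length ρ ≤ τ/6, and let [a..a+τ/3-1] ⊆ [i..j-τ/6+1] be an interval of starting positions. Let ψ be an injective map on the set of length-(τ/6) substrings of S, and define ψ_k = ψ(S[k..k+τ/6-1]). Then the set L = {ℓ ∈ [a..a+τ/3-1] : ψ_ℓ = min_{k ∈ [a..a+τ/3-1]} ψ_k} has at least 2 elements, and the minimum distance between two distinct elements of L equals ρ. -/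
/-- The positions in `[a..b]` achieving the minimum value of `F` on
`[a..b]`. -/
def argmins (F : ℕ → ℕ) (a b : ℕ) : Set ℕ :=
  {ℓ | ℓ ∈ Set.Icc a b ∧ ∀ k ∈ Set.Icc a b, F ℓ ≤ F k}

lemma hp_mul {α : Type*} {S : ℕ → α} {i j ρ : ℕ} (h : HasPeriodOn S i j ρ) :
    ∀ t u, i ≤ u → u + t * ρ ≤ j → S u = S (u + t * ρ) := by
  intro t
  induction t with
  | zero => intro u _ _; simp
  | succ t ih =>
    intro u hu hle
    have h1 : S u = S (u + t * ρ) := ih u hu (by nlinarith [Nat.le_refl ρ] <;> omega)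
    have h2 : S (u + t * ρ) = S (u + t * ρ + ρ) :=
      h (u + t * ρ) (by omega) (by rw [Nat.succ_mul] at hle; omega)
    have h3 : u + t * ρ + ρ = u + (t + 1) * ρ := by ring
    rw [h1, h2, h3]

lemma period_sub {α : Type*} {S : ℕ → α} {s e p q : ℕ}
    (hp : HasPeriodOn S s e p) (hq : HasPeriodOn S s e q)
    (hpq : p < q) (h1 : 1 ≤ p) (hlen : s + p + q ≤ e + 1) :
    HasPeriodOn S s e (q - p) := by
  intro k hk hke
  by_cases h : k + q ≤ e
  · have e1 : S k = S (k + q) := hq k hk h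
    have e2 : S (k + (q - p)) = S (k + (q - p) + p) := hp (k + (q - p)) (by omega) (by omega)
    have e3 : k + (q - p) + p = k + q := by omega
    rw [e3] at e2
    rw [e1, e2]
  · have e1 : S (k - p) = S (k - p + p) := hp (k - p) (by omega) (by omega)
    have e2 : S (k - p) = S (k - p + q) := hq (k - p) (by omega) (by omega)
    have e3 : k - p + p = k := by omega
    have e4 : k - p + q = k + (q - p) := by omega
    rw [e3] at e1
    rw [e4] at e2
    rw [← e1, e2]

lemma fineWilfAux {α : Type*} (S : ℕ → α) (s e : ℕ) :
    ∀ n p q, p + q ≤ n → HasPeriodOn S s e p → HasPeriodOn S s e q →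
      s + p + q ≤ e + 1 → HasPeriodOn S s e (Nat.gcd p q) := by
  intro n
  induction n with
  | zero =>
    intro p q hn hp _ _
    have hp0 : p = 0 := by omega
    have hq0 : q = 0 := by omega
    subst hp0; subst hq0
    simpa using hp
  | succ n ih =>
    intro p q hn hp hq hlen
    rcases Nat.eq_zero_or_pos p with rfl | hppos
    · simpa using hq
    rcases Nat.eq_zero_or_pos q with rfl | hqpos
    · simpa using hp
    rcases lt_trichotomy p q with hlt | heq | hgt
    · have hq' := period_sub hp hq hlt hppos hlen
      have := ih p (q - p) (by omega) hp hq' (by omega)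
      rwa [Nat.gcd_sub_self_right (le_of_lt hlt)] at this
    · subst heq; rwa [Nat.gcd_self]
    · have hp' := period_sub hq hp hgt hqpos (by omega)
      have := ih (p - q) q (by omega) hp' hq (by omega)
      rwa [Nat.gcd_sub_self_left (le_of_lt hgt)] at this

lemma period_extend_s7 {α : Type*} {S : ℕ → α} {i j x w ρ g : ℕ}
    (hρ : HasPeriodOn S i j ρ) (hg : HasPeriodOn S x w g)
    (hix : i ≤ x) (hwj : w ≤ j) (hlen : x + ρ + g ≤ w + 1) (hρ1 : 1 ≤ ρ) :
    HasPeriodOn S i j g := by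
  intro k hik hkg
  by_cases hcase : x ≤ k
  · obtain ⟨t, r, hrρ, hdec⟩ : ∃ t r, r < ρ ∧ k = x + r + t * ρ := by
      refine ⟨(k - x) / ρ, (k - x) % ρ, Nat.mod_lt _ hρ1, ?_⟩
      have h1 := Nat.mod_add_div (k - x) ρ
      have h2 : ρ * ((k - x) / ρ) = ((k - x) / ρ) * ρ := Nat.mul_comm _ _
      omega
    have e1 : S (x + r) = S ((x + r) + t * ρ) := hp_mul hρ t (x + r) (by omega) (by omega)
    have e2 : S (x + r + g) = S ((x + r + g) + t * ρ) := hp_mul hρ t (x + r + g) (by omega) (by omega)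
    have e3 : S (x + r) = S ((x + r) + g) := hg (x + r) (by omega) (by omega)
    have e4 : (x + r + g) + t * ρ = k + g := by omega
    have e5 : (x + r) + t * ρ = k := by omega
    rw [e4] at e2
    rw [e5] at e1
    rw [← e1, e3, e2]
  · obtain ⟨t, ht1, ht2⟩ : ∃ t, x ≤ k + t * ρ ∧ k + t * ρ ≤ x + ρ - 1 := by
      refine ⟨(x - k - 1) / ρ + 1, ?_, ?_⟩ <;>
      · have h1 := Nat.mod_add_div (x - k - 1) ρ
        have h2 : ρ * ((x - k - 1) / ρ) = ((x - k - 1) / ρ) * ρ := Nat.mul_comm _ _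
        have h3 : ((x - k - 1) / ρ + 1) * ρ = ((x - k - 1) / ρ) * ρ + ρ := by ring
        have h4 : (x - k - 1) % ρ < ρ := Nat.mod_lt _ hρ1
        omega
    have e1 : S k = S (k + t * ρ) := hp_mul hρ t k hik (by omega)
    have e2 : S (k + g) = S ((k + g) + t * ρ) := hp_mul hρ t (k + g) (by omega) (by omega)
    have e3 : S (k + t * ρ) = S ((k + t * ρ) + g) := hg (k + t * ρ) (by omega) (by omega)
    have e4 : (k + g) + t * ρ = (k + t * ρ) + g := by omega
    rw [e4] at e2
    rw [e1, e3, ← e2]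


/-- Let `S' = S[i..j]` be a periodic substring of `S` with principal period
length `ρ ≤ τ/6`, let `[a..a+τ/3-1] ⊆ [i..j-τ/6+1]` be an interval of
starting positions, and let `F` be a collision-free fingerprint on the
length-`τ/6` substrings of `S` (`F k = F l` iff `S[k..k+τ/6-1] = S[l..l+τ/6-1]`).
Then the set `L` of positions of `[a..a+τ/3-1]` with minimal fingerprint
has at least two elements, and the minimum distance between two distinct
elements of `L` equals `ρ`. -/
theorem min_fingerprint_distance {α : Type*} (S : ℕ → α) (n τ i j ρ a : ℕ)
    (F : ℕ → ℕ)
    (h6 : 6 ∣ τ) (hτ : 6 ≤ τ)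
    (hi : 1 ≤ i) (hjn : j ≤ n)
    (hper : IsLeast {p | 1 ≤ p ∧ HasPeriodOn S i j p} ρ)
    (hρ : 6 * ρ ≤ τ)
    (hperiodic : 2 * ρ ≤ j - i + 1)
    (hia : i ≤ a) (haj : a + τ / 3 + τ / 6 ≤ j + 2)
    (hF : ∀ k l, 1 ≤ k → k + τ / 6 ≤ n + 1 → 1 ≤ l → l + τ / 6 ≤ n + 1 →
      (F k = F l ↔ ∀ t < τ / 6, S (k + t) = S (l + t))) :
    2 ≤ (argmins F a (a + τ / 3 - 1)).ncard ∧
      IsLeast {d | ∃ x ∈ argmins F a (a + τ / 3 - 1),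
        ∃ y ∈ argmins F a (a + τ / 3 - 1), x < y ∧ d = y - x} ρ := by
  set m : ℕ := τ / 6 with hm
  have hm6 : τ = 6 * m := by omega
  have h3 : τ / 3 = 2 * m := by omega
  have hm1 : 1 ≤ m := by omega
  have hρm : ρ ≤ m := by omega
  have hρ1 : 1 ≤ ρ := hper.1.1
  have hSper : HasPeriodOn S i j ρ := hper.1.2
  set b : ℕ := a + τ / 3 - 1 with hb
  have hbval : b = a + 2 * m - 1 := by omega
  have hbj : b + m ≤ j + 1 := by omega
  -- fingerprints are well defined on [a,b]
  have hrange : ∀ k, a ≤ k → k ≤ b → 1 ≤ k ∧ k + m ≤ n + 1 := by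
    intro k h1 h2; omega
  -- shift by ρ preserves fingerprints
  have hFeq : ∀ k, a ≤ k → k + ρ ≤ b → F k = F (k + ρ) := by
    intro k h1 h2
    have hr1 := hrange k h1 (by omega)
    have hr2 := hrange (k + ρ) (by omega) (by omega)
    refine (hF k (k + ρ) hr1.1 hr1.2 hr2.1 hr2.2).2 ?_
    intro t ht
    have := hSper (k + t) (by omega) (by omega)
    have e : k + t + ρ = k + ρ + t := by omega
    rwa [e] at this
  -- a minimizer exists
  obtain ⟨ℓ₀, hℓ₀T, hmin⟩ := (Finset.Icc a b).exists_min_image F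
    ⟨a, by simp [Finset.mem_Icc]; omega⟩
  have hℓ₀ : ℓ₀ ∈ argmins F a b := by
    refine ⟨by simpa [Set.mem_Icc] using Finset.mem_Icc.1 hℓ₀T, ?_⟩
    intro k hk
    exact hmin k (Finset.mem_Icc.2 (Set.mem_Icc.1 hk))
  have hclose : ∀ ℓ ∈ argmins F a b, ∀ k ∈ Set.Icc a b, F k = F ℓ → k ∈ argmins F a b := by
    intro ℓ hℓ k hk hFk
    exact ⟨hk, fun u hu => by rw [hFk]; exact hℓ.2 u hu⟩
  -- a pair at distance ρ
  obtain ⟨x₀, hx₀, hx₀ρ⟩ : ∃ x, x ∈ argmins F a b ∧ x + ρ ∈ argmins F a b := by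
    have hℓab := Set.mem_Icc.1 hℓ₀.1
    by_cases hc : ℓ₀ + ρ ≤ b
    · exact ⟨ℓ₀, hℓ₀, hclose ℓ₀ hℓ₀ (ℓ₀ + ρ) (Set.mem_Icc.2 ⟨by omega, hc⟩)
        ((hFeq ℓ₀ hℓab.1 hc).symm)⟩
    · have h1 : a + ρ ≤ ℓ₀ := by omega
      have h2 : F (ℓ₀ - ρ) = F ℓ₀ := by
        have := hFeq (ℓ₀ - ρ) (by omega) (by omega)
        rwa [Nat.sub_add_cancel (by omega)] at this
      have hmem := hclose ℓ₀ hℓ₀ (ℓ₀ - ρ) (Set.mem_Icc.2 ⟨by omega, by omega⟩) h2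
      refine ⟨ℓ₀ - ρ, hmem, ?_⟩
      rwa [Nat.sub_add_cancel (by omega)]
  -- lower bound: distances between minimizers are ≥ ρ
  have hlb : ∀ x ∈ argmins F a b, ∀ y ∈ argmins F a b, x < y → ρ ≤ y - x := by
    intro x hx y hy hxy
    by_contra hcon
    set d : ℕ := y - x with hd
    have hd1 : 1 ≤ d := by omega
    have hdρ : d < ρ := by omega
    have hxab := Set.mem_Icc.1 hx.1
    have hyab := Set.mem_Icc.1 hy.1
    have hrx := hrange x hxab.1 hxab.2
    have hry := hrange y hyab.1 hyab.2
    have hFxy : F x = F y := le_antisymm (hx.2 y hy.1) (hy.2 x hx.1)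
    have heq : ∀ t < m, S (x + t) = S (y + t) :=
      (hF x y hrx.1 hrx.2 hry.1 hry.2).1 hFxy
    -- d is a period on [x, y+m-1]
    have hdper : HasPeriodOn S x (y + m - 1) d := by
      intro k hk hke
      have ht := heq (k - x) (by omega)
      have e1 : x + (k - x) = k := by omega
      have e2 : y + (k - x) = k + d := by omega
      rwa [e1, e2] at ht
    -- ρ is a period on [x, y+m-1]
    have hρper : HasPeriodOn S x (y + m - 1) ρ := by
      intro k hk hke
      exact hSper k (by omega) (by omega)
    have hg := fineWilfAux S x (y + m - 1) (d + ρ) d ρ le_rfl hdper hρper (by omega)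
    have hgext : HasPeriodOn S i j (Nat.gcd d ρ) :=
      period_extend_s7 hSper hg (by omega) (by omega)
        (by have := Nat.gcd_le_left (n := ρ) hd1; omega) hρ1
    have hgle : ρ ≤ Nat.gcd d ρ :=
      hper.2 ⟨Nat.gcd_pos_of_pos_left _ hd1, hgext⟩
    have := Nat.gcd_le_left (n := ρ) hd1
    omega
  have hx₀ab := Set.mem_Icc.1 hx₀.1
  constructor
  · rw [show (2 : ℕ) = 1 + 1 from rfl]
    have hfin : (argmins F a b).Finite :=
      (Set.finite_Icc a b).subset (fun u hu => hu.1)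
    have : 1 < (argmins F a b).ncard :=
      (Set.one_lt_ncard hfin).2 ⟨x₀, hx₀, x₀ + ρ, hx₀ρ, by omega⟩
    omega
  · constructor
    · exact ⟨x₀, hx₀, x₀ + ρ, hx₀ρ, by omega, by omega⟩
    · rintro d ⟨x, hx, y, hy, hxy, rfl⟩
      exact hlb x hx y hy hxy
end

section
/- For integers m and t with t < m, there exists a set DC ⊆ [m] of size O(m/√t) such that for every i, j ∈ [m - t] there exists k ≤ t with both i + k ∈ DC and j + k ∈ DC. -/
/-!
Reduce modulo `p = r²` with `r = ⌊√t⌋`. The residues `{0, …, r-1} ∪ {0, -r, …, -(r-1)r}` form a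
difference cover of `ℤ/p` of size at most `2r`, since every residue is `s + q r` with `s, q < r`.
For any `i, j` pick `d₁ - d₂ ≡ i - j` in the cover; the shift `k ≡ d₁ - i` with `k < p ≤ t` moves
`i` to `d₁` and `j` to `d₂`. Lifting the cover periodically to `[1, m]` costs about `(m / r²) · 2r`
elements, which is `O(m / √t)`.
-/

open Finset

def IsDifferenceCover {p : ℕ} (D : Finset (ZMod p)) : Prop :=
  ∀ n : ZMod p, ∃ d₁ ∈ D, ∃ d₂ ∈ D, d₁ - d₂ = n

def periodicLift {p : ℕ} (D : Finset (ZMod p)) (m : ℕ) : Finset ℕ :=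
  {x ∈ Icc 1 m | (x : ZMod p) ∈ D}

theorem IsDifferenceCover.exists_shift {p : ℕ} [NeZero p] {D : Finset (ZMod p)}
    (hD : IsDifferenceCover D) (i j : ℕ) :
    ∃ k < p, ((i + k : ℕ) : ZMod p) ∈ D ∧ ((j + k : ℕ) : ZMod p) ∈ D := by
  obtain ⟨d₁, hd₁, d₂, hd₂, hd⟩ := hD (i - j)
  refine ⟨(d₁ - i).val, ZMod.val_lt _, ?_, ?_⟩
  · convert hd₁ using 1
    push_cast [ZMod.natCast_zmod_val]
    ring
  · convert hd₂ using 1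
    push_cast [ZMod.natCast_zmod_val]
    linear_combination hd

theorem card_periodicLift_le {p : ℕ} [NeZero p] (D : Finset (ZMod p)) (m : ℕ) :
    #(periodicLift D m) ≤ (m / p + 1) * #D := by
  rw [← card_range (m / p + 1), ← card_product]
  refine card_le_card_of_injOn (fun x => (x / p, (x : ZMod p))) ?_ ?_
  · intro x hx
    simp only [periodicLift, coe_filter, mem_Icc, Set.mem_ofPred_eq] at hx
    simp only [coe_product, coe_range, Set.mem_prod, Set.mem_Iio, mem_coe]
    exact ⟨Nat.lt_succ_of_le (Nat.div_le_div_right hx.1.2), hx.2⟩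
  · intro x _ y _ hxy
    simp only [Prod.mk.injEq] at hxy
    have hmod : x % p = y % p := by
      rw [← ZMod.val_natCast, hxy.2, ZMod.val_natCast]
    rw [← Nat.div_add_mod x p, ← Nat.div_add_mod y p, hxy.1, hmod]

def sqrtDifferenceCover (r : ℕ) : Finset (ZMod (r ^ 2)) :=
  (range r).image (fun s : ℕ => (s : ZMod (r ^ 2))) ∪
    (range r).image (fun q : ℕ => -((q : ZMod (r ^ 2)) * r))

theorem card_sqrtDifferenceCover_le (r : ℕ) : #(sqrtDifferenceCover r) ≤ 2 * r := by
  calc #(sqrtDifferenceCover r) ≤ r + r :=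
        (card_union_le _ _).trans (add_le_add (card_image_le.trans (card_range r).le)
          (card_image_le.trans (card_range r).le))
    _ = 2 * r := (two_mul r).symm

theorem isDifferenceCover_sqrtDifferenceCover {r : ℕ} (hr : 0 < r) :
    IsDifferenceCover (sqrtDifferenceCover r) := by
  have : NeZero (r ^ 2) := ⟨by positivity⟩
  intro n
  have hq : n.val / r < r := Nat.div_lt_of_lt_mul (by simpa [sq] using ZMod.val_lt n)
  refine ⟨(n.val % r : ℕ), mem_union_left _ (mem_image_of_mem _ (mem_range.2 (Nat.mod_lt _ hr))),
    -(((n.val / r : ℕ) : ZMod (r ^ 2)) * r), mem_union_right _ (mem_image_of_mem _ (mem_range.2 hq)), ?_⟩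
  conv_rhs => rw [← ZMod.natCast_zmod_val n, ← Nat.mod_add_div n.val r]
  push_cast
  ring

theorem div_sqrt_sq_add_one_mul_two_sqrt_le (m t : ℕ) (ht : 0 < t) (htm : t ≤ m) :
    (((m / Nat.sqrt t ^ 2 + 1) * (2 * Nat.sqrt t) : ℕ) : ℝ) ≤ 6 * m / Real.sqrt t := by
  set r := Nat.sqrt t
  have hs : 0 < Real.sqrt t := Real.sqrt_pos.2 (by exact_mod_cast ht)
  have hr1 : (1 : ℝ) ≤ r := by exact_mod_cast Nat.sqrt_pos.2 ht
  have hrs : (r : ℝ) ≤ Real.sqrt t := Real.nat_sqrt_le_real_sqrt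
  have hsr : Real.sqrt t ≤ 2 * r := by linarith [Real.real_sqrt_lt_nat_sqrt_succ (a := t)]
  have hq : ((m / r ^ 2 : ℕ) : ℝ) * r ^ 2 ≤ m := by exact_mod_cast Nat.div_mul_le_self m (r ^ 2)
  have htt : Real.sqrt t * Real.sqrt t = t := Real.mul_self_sqrt (Nat.cast_nonneg t)
  have htm' : (t : ℝ) ≤ m := by exact_mod_cast htm
  have hq0 : (0 : ℝ) ≤ (m / r ^ 2 : ℕ) := Nat.cast_nonneg _
  rw [le_div_iff₀ hs]
  push_cast
  -- `(m / r²) · 2r · √t ≤ 4 m` because `√t ≤ 2r`, and `2r · √t ≤ 2t ≤ 2m` because `r ≤ √t`.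
  nlinarith [mul_le_mul_of_nonneg_left hsr (mul_nonneg hq0 (by positivity : (0 : ℝ) ≤ r)),
    mul_le_mul_of_nonneg_right hrs hs.le]

/-- Difference covers: there is a universal constant `C` such that for all
integers `t < m` there exists a set `DC ⊆ [m]` of size at most `C·m/√t`
such that for every `i, j ∈ [m - t]` there is a shift `k ≤ t` with both
`i + k ∈ DC` and `j + k ∈ DC`. -/
theorem difference_cover_exists :
    ∃ C : ℝ, 0 < C ∧ ∀ m t : ℕ, 0 < t → t < m →
      ∃ DC : Finset ℕ, DC ⊆ Finset.Icc 1 m ∧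
        (DC.card : ℝ) ≤ C * m / Real.sqrt t ∧
        ∀ i j, i ∈ Finset.Icc 1 (m - t) → j ∈ Finset.Icc 1 (m - t) →
          ∃ k ≤ t, i + k ∈ DC ∧ j + k ∈ DC := by
  refine ⟨6, by norm_num, fun m t ht htm => ?_⟩
  set r := Nat.sqrt t
  have hr : 0 < r := Nat.sqrt_pos.2 ht
  have : NeZero (r ^ 2) := ⟨by positivity⟩
  refine ⟨periodicLift (sqrtDifferenceCover r) m, filter_subset _ _, ?_, ?_⟩
  · calc (#(periodicLift (sqrtDifferenceCover r) m) : ℝ)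
        ≤ ((m / r ^ 2 + 1) * (2 * r) : ℕ) := by
          exact_mod_cast (card_periodicLift_le _ m).trans
            (Nat.mul_le_mul_left _ (card_sqrtDifferenceCover_le r))
      _ ≤ 6 * m / Real.sqrt t := div_sqrt_sq_add_one_mul_two_sqrt_le m t ht htm.le
  · intro i j hi hj
    obtain ⟨k, hkp, hik, hjk⟩ := (isDifferenceCover_sqrtDifferenceCover hr).exists_shift i j
    have hkt : k ≤ t := (hkp.trans_le (Nat.sqrt_le' t)).le
    rw [mem_Icc] at hi hj
    exact ⟨k, hkt, mem_filter.2 ⟨mem_Icc.2 ⟨by omega, by omega⟩, hik⟩,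
      mem_filter.2 ⟨mem_Icc.2 ⟨by omega, by omega⟩, hjk⟩⟩
end

section
/- Let S be a string of length n, τ ≥ 1, and let ID : [n-τ+1] → ℕ be a function such that ID(j) depends only on S[j..j+τ-1] (i.e., S[j..j+τ-1] = S[k..k+τ-1] implies ID(j) = ID(k)). Define P = {j ∈ [n-τ] : ∃ ℓ ∈ [j-τ+1..j] with ID(j) = min_{k ∈ [ℓ..ℓ+τ-1]} ID(k)}. Then P satisfies local consistency with parameter 2τ: for any i, j ∈ [1+2τ..n-2τ] with S[i-2τ..i+2τ] = S[j-2τ..j+2τ], we have i ∈ P ⟺ j ∈ P. -/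
/-- The set of positions `j ∈ [1..n-τ]` whose `ID` is minimal over some
window `[ℓ..ℓ+τ-1]` of length `τ` containing `j`. -/
def minIDSet (n τ : ℕ) (ID : ℕ → ℕ) : Set ℕ :=
  {j | 1 ≤ j ∧ j ≤ n - τ ∧ ∃ ℓ, 1 ≤ ℓ ∧ ℓ ≤ j ∧ j < ℓ + τ ∧
    ∀ k, ℓ ≤ k → k < ℓ + τ → ID j ≤ ID k}

lemma minIDSet_local_consistency_aux {α : Type*} (S : ℕ → α) (n τ : ℕ)
    (hτ : 1 ≤ τ) (ID : ℕ → ℕ)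
    (hID : ∀ j k, 1 ≤ j → j + τ ≤ n + 1 → 1 ≤ k → k + τ ≤ n + 1 →
      (∀ t < τ, S (j + t) = S (k + t)) → ID j = ID k)
    (i j : ℕ) (hi : 1 + 2 * τ ≤ i) (hin : i ≤ n - 2 * τ)
    (hj : 1 + 2 * τ ≤ j) (hjn : j ≤ n - 2 * τ)
    (heq : ∀ k ≤ 4 * τ, S (i - 2 * τ + k) = S (j - 2 * τ + k)) :
    i ∈ minIDSet n τ ID → j ∈ minIDSet n τ ID := by
  have hn : 4 * τ + 1 ≤ n := by omega
  rintro ⟨hi1, hi2, ℓ, hℓ1, hℓ2, hℓ3, hmin⟩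
  -- a general fact: ID at corresponding positions agrees
  have key : ∀ p q : ℕ, i - 2 * τ ≤ p → p ≤ i + τ → q + i = p + j →
      ID p = ID q := by
    intro p q hp1 hp2 hpq
    apply hID
    · omega
    · omega
    · omega
    · omega
    · intro t ht
      have h1 : p + t = i - 2 * τ + (p + t - (i - 2 * τ)) := by omega
      have h2 : q + t = j - 2 * τ + (p + t - (i - 2 * τ)) := by omega
      rw [h1, h2]
      exact heq _ (by omega)
  have hIDij : ID i = ID j := key i j (by omega) (by omega) (by omega)
  refine ⟨by omega, by omega, j - (i - ℓ), by omega, by omega, by omega, ?_⟩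
  intro k hk1 hk2
  have hIDk : ID (k + i - j) = ID k := key (k + i - j) k (by omega) (by omega) (by omega)
  have := hmin (k + i - j) (by omega) (by omega)
  omega

/-- If `ID(j)` depends only on `S[j..j+τ-1]`, then the induced set `P` of
window-minima positions satisfies local consistency with parameter `2τ`:
whenever `i, j ∈ [1+2τ..n-2τ]` and `S[i-2τ..i+2τ] = S[j-2τ..j+2τ]`, we have
`i ∈ P ↔ j ∈ P`. -/
theorem minIDSet_local_consistency {α : Type*} (S : ℕ → α) (n τ : ℕ)
    (hτ : 1 ≤ τ) (ID : ℕ → ℕ)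
    (hID : ∀ j k, 1 ≤ j → j + τ ≤ n + 1 → 1 ≤ k → k + τ ≤ n + 1 →
      (∀ t < τ, S (j + t) = S (k + t)) → ID j = ID k)
    (i j : ℕ) (hi : 1 + 2 * τ ≤ i) (hin : i ≤ n - 2 * τ)
    (hj : 1 + 2 * τ ≤ j) (hjn : j ≤ n - 2 * τ)
    (heq : ∀ k ≤ 4 * τ, S (i - 2 * τ + k) = S (j - 2 * τ + k)) :
    i ∈ minIDSet n τ ID ↔ j ∈ minIDSet n τ ID := by
  constructor
  · exact minIDSet_local_consistency_aux S n τ hτ ID hID i j hi hin hj hjn heq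
  · exact minIDSet_local_consistency_aux S n τ hτ ID hID j i hj hjn hi hin
      (fun k hk => (heq k hk).symm)
end

section
/- In the hierarchical decomposition above, for any level 0 ≤ μ ≤ log_{3/2} τ, if p_i < p_{i+1} are two consecutive block-start positions at level μ with p_{i+1} - p_i > 12·(3/2)^μ, then the substring S[p_i..p_{i+1}-1] has a period of length at most (3/2)^μ. -/
/-- `p` and `q` are consecutive elements of `A`. -/
def ConsecIn (A : Set ℕ) (p q : ℕ) : Prop :=
  p ∈ A ∧ q ∈ A ∧ p < q ∧ ∀ r ∈ A, ¬(p < r ∧ r < q)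

/-- A hierarchical block decomposition of `[1..n]` (block starts at each
level, with sentinel `n+1`): level `0` blocks are single characters, and
every block of level `μ+1` is either (a) a level-`μ` block of length at
least `(3/2)^(μ+1)`, (b) a concatenation of at least `2` equal consecutive
level-`μ` sub-blocks each of length `< (3/2)^(μ+1)`, or (c) a concatenation
of between `2` and `11` consecutive level-`μ` sub-blocks each of length
`< (3/2)^(μ+1)`. -/
structure HierDecomp14 {α : Type*} (S : ℕ → α) (n : ℕ)
    (starts : ℕ → Set ℕ) : Prop where
  level0 : starts 0 = Set.Icc 1 (n + 1)
  mono : ∀ μ, starts (μ + 1) ⊆ starts μ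
  left_mem : ∀ μ, 1 ∈ starts μ
  right_mem : ∀ μ, n + 1 ∈ starts μ
  trichotomy : ∀ μ p q, ConsecIn (starts (μ + 1)) p q →
    (ConsecIn (starts μ) p q ∧
      ((3 : ℝ) / 2) ^ (μ + 1) ≤ ((q - p : ℕ) : ℝ)) ∨
    (∃ x k, 1 ≤ x ∧ 2 ≤ k ∧ q = p + k * x ∧
      ((x : ℝ) < ((3 : ℝ) / 2) ^ (μ + 1)) ∧
      (∀ m < k, ConsecIn (starts μ) (p + m * x) (p + (m + 1) * x)) ∧
      (∀ t, p ≤ t → t + x < q → S t = S (t + x))) ∨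
    (2 ≤ (starts μ ∩ Set.Ico p q).ncard ∧
      (starts μ ∩ Set.Ico p q).ncard ≤ 11 ∧
      ∀ a b, ConsecIn (starts μ) a b → p ≤ a → b ≤ q →
        ((b - a : ℕ) : ℝ) < ((3 : ℝ) / 2) ^ (μ + 1))

/-- If all consecutive gaps of `A` within `[p, q]` are `< B`, then
`q - p < ncard (A ∩ [p,q)) * B`. -/
lemma gap_sum (A : Set ℕ) (B : ℝ) :
    ∀ d p q, q - p ≤ d → p ∈ A → q ∈ A → p < q →
    (∀ a b, ConsecIn A a b → p ≤ a → b ≤ q → ((b - a : ℕ) : ℝ) < B) →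
    ((q - p : ℕ) : ℝ) < (A ∩ Set.Ico p q).ncard * B := by
  intro d
  induction d with
  | zero => intro p q h _ _ hpq _; omega
  | succ d ih =>
    intro p q hd hp hq hpq hgap
    have hne : {r | r ∈ A ∧ p < r}.Nonempty := ⟨q, hq, hpq⟩
    set r := sInf {r | r ∈ A ∧ p < r} with hr
    have hrT : r ∈ {r | r ∈ A ∧ p < r} := Nat.sInf_mem hne
    have hrA : r ∈ A := hrT.1
    have hpr : p < r := hrT.2
    have hrq : r ≤ q := Nat.sInf_le ⟨hq, hpq⟩
    have hconsec : ConsecIn A p r := by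
      refine ⟨hp, hrA, hpr, fun s hs h => ?_⟩
      have := Nat.sInf_le (show s ∈ {r | r ∈ A ∧ p < r} from ⟨hs, h.1⟩)
      omega
    have hsingle : A ∩ Set.Ico p r = {p} := by
      ext s
      simp only [Set.mem_inter_iff, Set.mem_Ico, Set.mem_singleton_iff]
      constructor
      · rintro ⟨hsA, hps, hsr⟩
        rcases eq_or_lt_of_le hps with h | h
        · exact h.symm
        · exact absurd (Nat.sInf_le (show s ∈ {r | r ∈ A ∧ p < r} from ⟨hsA, h⟩))
            (by omega)
      · rintro rfl; exact ⟨hp, le_rfl, hpr⟩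
    have hgap1 : ((r - p : ℕ) : ℝ) < B := hgap p r hconsec le_rfl hrq
    rcases eq_or_lt_of_le hrq with rfl | hrq'
    · rw [hsingle, Set.ncard_singleton]
      simpa using hgap1
    · have hsplit : A ∩ Set.Ico p q = (A ∩ Set.Ico p r) ∪ (A ∩ Set.Ico r q) := by
        rw [← Set.inter_union_distrib_left, Set.Ico_union_Ico_eq_Ico hpr.le hrq]
      have hfin1 : (A ∩ Set.Ico p r).Finite := (Set.finite_Ico p r).inter_of_right _
      have hfin2 : (A ∩ Set.Ico r q).Finite := (Set.finite_Ico r q).inter_of_right _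
      have hdisj : Disjoint (A ∩ Set.Ico p r) (A ∩ Set.Ico r q) := by
        apply Set.disjoint_left.2
        rintro s ⟨_, _, h1⟩ ⟨_, h2, _⟩
        omega
      have hcard : (A ∩ Set.Ico p q).ncard = 1 + (A ∩ Set.Ico r q).ncard := by
        rw [hsplit, Set.ncard_union_eq hdisj hfin1 hfin2, hsingle, Set.ncard_singleton]
      have ih2 := ih r q (by omega) hrA hq hrq'
        (fun a b hc ha hb => hgap a b hc (by omega) hb)
      have heq : ((q - p : ℕ) : ℝ) = ((q - r : ℕ) : ℝ) + ((r - p : ℕ) : ℝ) := by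
        have : q - p = (q - r) + (r - p) := by omega
        rw [this]; push_cast; ring
      rw [hcard]
      push_cast
      linarith

/-- In the hierarchical decomposition, for any level `0 ≤ μ ≤ log_{3/2} τ`,
if `p < q` are consecutive block-start positions at level `μ` with
`q - p > 12·(3/2)^μ`, then `S[p..q-1]` has a period of length at most
`(3/2)^μ`. -/
theorem long_block_periodic {α : Type*} (S : ℕ → α) (n τ : ℕ)
    (starts : ℕ → Set ℕ) (H : HierDecomp14 S n starts) (μ : ℕ)
    (hμ : ((3 : ℝ) / 2) ^ μ ≤ (τ : ℝ))
    (p q : ℕ) (hpq : ConsecIn (starts μ) p q)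
    (hlong : 12 * ((3 : ℝ) / 2) ^ μ < ((q - p : ℕ) : ℝ)) :
    ∃ ρ, 1 ≤ ρ ∧ ((ρ : ℕ) : ℝ) ≤ ((3 : ℝ) / 2) ^ μ ∧
      HasPeriodOn S p (q - 1) ρ := by
  induction μ generalizing p q with
  | zero =>
    exfalso
    have hp : p ∈ Set.Icc 1 (n + 1) := H.level0 ▸ hpq.1
    have hq : q ∈ Set.Icc 1 (n + 1) := H.level0 ▸ hpq.2.1
    have hlt : p < q := hpq.2.2.1
    have hq1 : q = p + 1 := by
      by_contra h
      have hmem : p + 1 ∈ starts 0 := by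
        rw [H.level0]
        exact ⟨by omega, by have := hq.2; omega⟩
      exact hpq.2.2.2 (p + 1) hmem ⟨by omega, by omega⟩
    rw [hq1] at hlong
    simp at hlong
  | succ μ ih =>
    have hB : (0 : ℝ) < ((3 : ℝ) / 2) ^ (μ + 1) := by positivity
    have hmono : ((3 : ℝ) / 2) ^ μ ≤ ((3 : ℝ) / 2) ^ (μ + 1) :=
      pow_le_pow_right₀ (by norm_num) (Nat.le_succ μ)
    rcases H.trichotomy μ p q hpq with ⟨hc, _⟩ | ⟨x, k, hx, hk, hqpk, hxlt, _, hper⟩ |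
      ⟨h2le, h11, hgap⟩
    · obtain ⟨ρ, h1, h2, h3⟩ := ih (le_trans hmono hμ) p q hc
        (by nlinarith [pow_pos (show (0:ℝ) < 3/2 by norm_num) μ])
      exact ⟨ρ, h1, h2.trans hmono, h3⟩
    · refine ⟨x, hx, le_of_lt hxlt, fun t ht htx => ?_⟩
      have hlt := hpq.2.2.1
      exact hper t ht (by omega)
    · exfalso
      have hp : p ∈ starts μ := H.mono μ hpq.1
      have hq : q ∈ starts μ := H.mono μ hpq.2.1
      have hlt : p < q := hpq.2.2.1
      have hsum := gap_sum (starts μ) (((3 : ℝ) / 2) ^ (μ + 1)) (q - p) p q le_rfl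
        hp hq hlt hgap
      have hcast : (((starts μ ∩ Set.Ico p q).ncard : ℕ) : ℝ) ≤ 11 := by
        exact_mod_cast h11
      nlinarith
end

section
/- Let P be a forward synchronized (τ,δ)-partitioning set of a string S, with positions p_1 < ... < p_h, and suppose the representative strings s_i and s_j of two regular blocks [p_i..p_{i+1}-1] and [p_j..p_{j+1}-1] are equal, where s_k = S[p_k..p_k+3δ-1] and the blocks have length at most τ ≤ δ. Then S[p_i..p_{i+1}-1] = S[p_j..p_{j+1}-1]. -/
/-- `ℓ = LCE(i,j)`: the first `ℓ` characters of the suffixes starting at `i`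
and `j` agree, and the next ones differ. -/
def IsLCE {α : Type*} (S : ℕ → α) (i j ℓ : ℕ) : Prop :=
  (∀ k < ℓ, S (i + k) = S (j + k)) ∧ S (i + ℓ) ≠ S (j + ℓ)

/-- `P ⊆ [n]` is a `(τ,δ)`-partitioning set of the length-`n` string `S`. -/
structure PartitioningSet {α : Type*} (S : ℕ → α) (n τ δ : ℕ) (P : Set ℕ) : Prop where
  one_le_τ : 1 ≤ τ
  τ_le_δ : τ ≤ δ
  δ_le_n : δ ≤ n
  subset : P ⊆ Set.Icc 1 n
  /-- Local consistency: for `i, j ∈ [1+δ..n-δ]` with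
  `S[i-δ..i+δ] = S[j-δ..j+δ]` we have `i ∈ P ↔ j ∈ P`. -/
  localConsistency : ∀ i j, 1 + δ ≤ i → i ≤ n - δ → 1 + δ ≤ j → j ≤ n - δ →
    (∀ k ≤ 2 * δ, S (i - δ + k) = S (j - δ + k)) → (i ∈ P ↔ j ∈ P)
  /-- Compactness: consecutive positions of `P ∪ {1, n+1}` are at distance
  at most `τ`, or delimit a block that is periodic with period length at
  most `τ`. -/
  compactness : ∀ p q, p ∈ P ∪ {1, n + 1} → q ∈ P ∪ {1, n + 1} → p < q →
    (∀ r ∈ P ∪ {1, n + 1}, ¬(p < r ∧ r < q)) →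
    q - p ≤ τ ∨ ∃ ρ, 1 ≤ ρ ∧ ρ ≤ τ ∧ HasPeriodOn S p (q - 1) ρ

/-- Let `P` be a forward synchronized `(τ,δ)`-partitioning set of `S`, and
suppose the representative strings `s_i = S[p_i..p_i+3δ-1]` and
`s_j = S[p_j..p_j+3δ-1]` of two regular blocks `[p_i..p_{i+1}-1]` and
`[p_j..p_{j+1}-1]` (blocks of length at most `τ ≤ δ`) are equal.  Then the
blocks are equal: `S[p_i..p_{i+1}-1] = S[p_j..p_{j+1}-1]`. -/
theorem regular_blocks_eq_of_rep_eq {α : Type*} (S : ℕ → α) (n τ δ : ℕ)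
    (P : Set ℕ) (hP : PartitioningSet S n τ δ P)
    -- `P` is forward synchronized
    (hsync : ∀ a a' b b', a ∈ P → b ∈ P →
      ConsecIn (P ∪ {n + 1}) a a' → ConsecIn (P ∪ {n + 1}) b b' →
      (∀ k ≤ a' - a + δ, S (a + k) = S (b + k)) → a' - a = b' - b)
    (pi pi1 pj pj1 : ℕ) (hpi : pi ∈ P) (hpj : pj ∈ P)
    (hci : ConsecIn (P ∪ {n + 1}) pi pi1)
    (hcj : ConsecIn (P ∪ {n + 1}) pj pj1)
    (hregi : pi1 - pi ≤ τ) (hregj : pj1 - pj ≤ τ)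
    (hrep : ∀ k < 3 * δ, S (pi + k) = S (pj + k)) :
    pi1 - pi = pj1 - pj ∧ ∀ k < pi1 - pi, S (pi + k) = S (pj + k) := by
  have hδ : 1 ≤ δ := le_trans hP.one_le_τ hP.τ_le_δ
  have hlen : pi1 - pi = pj1 - pj := by
    apply hsync pi pi1 pj pj1 hpi hpj hci hcj
    intro k hk
    apply hrep
    have : pi1 - pi + δ ≤ τ + δ := by omega
    have : τ + δ ≤ δ + δ := by have := hP.τ_le_δ; omega
    omega
  refine ⟨hlen, fun k hk => hrep k ?_⟩
  have := hP.τ_le_δ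
  omega
end

section
/- Let P be a forward synchronized (τ,δ)-partitioning set of S and let S'_P be the string of length |P| obtained by replacing each block by the rank of its representative string (where representative strings are defined so that equal representative strings imply equal blocks, and the lexicographic order of representatives agrees with the order of suffixes when representatives differ). Then for any two distinct positions p_i, p_j ∈ P: S[p_i..n] < S[p_j..n] lexicographically if and only if S'_P[i..|P|] < S'_P[j..|P|] lexicographically. -/
/-!
Cut the suffix of `S` at `p i` into the block `[p i..p (i+1) - 1]` followed by the suffix
at `p (i+1)`. If `rep i ≠ rep j`, both comparisons are decided by the representatives, by
hypothesis on the left and by the first letter of `S'_P` on the right. If `rep i = rep j`, the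
two blocks coincide, so both comparisons pass to the suffixes at `i + 1` and `j + 1`; this
descent ends when one of the suffixes is empty, which happens on both sides at the same time.
-/

namespace List

variable {β : Type*} [LT β]

theorem nil_lt_iff_ne_nil {l : List β} : [] < l ↔ l ≠ [] := by
  cases l with
  | nil => exact iff_of_false (not_lt_nil _) (not_not.mpr rfl)
  | cons a l => exact iff_of_true (nil_lt_cons a l) (cons_ne_nil a l)

theorem cons_lt_cons_iff_of_ne {a b : β} (hab : a ≠ b) {u v : List β} :
    a :: u < b :: v ↔ a < b := by
  simp only [cons_lt_cons_iff, hab, false_and, or_false]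

theorem append_lt_append_left_iff [Std.Irrefl (α := β) (· < ·)] (x : List β) {u v : List β} :
    x ++ u < x ++ v ↔ u < v := by
  induction x with
  | nil => rfl
  | cons a x ih => rwa [cons_append, cons_append, cons_lt_cons_self]

end List

/-- `slice f a b` is the word `f[a..b-1]`. -/
def slice {β : Type*} (f : ℕ → β) (a b : ℕ) : List β :=
  (List.range (b - a)).map (fun t => f (a + t))

section Slice

variable {β : Type*} {f : ℕ → β} {a b c : ℕ}

theorem slice_eq_nil_iff : slice f a b = [] ↔ b ≤ a := by
  simp only [slice, List.map_eq_nil_iff, List.range_eq_nil]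
  omega

theorem slice_append (hab : a ≤ b) (hbc : b ≤ c) :
    slice f a b ++ slice f b c = slice f a c := by
  obtain ⟨k, rfl⟩ := Nat.exists_eq_add_of_le hab
  obtain ⟨l, rfl⟩ := Nat.exists_eq_add_of_le hbc
  simp only [slice, Nat.add_sub_cancel_left, Nat.add_assoc, Nat.add_sub_add_left, List.range_add,
    List.map_append, List.map_map, Function.comp_def]

theorem slice_eq_cons (hab : a < b) : slice f a b = f a :: slice f (a + 1) b := by
  rw [← slice_append (Nat.le_succ a) hab]
  simp [slice]

end Slice

theorem lt_iff_slice_lt_of_blocks {β γ : Type*} [LT β] [Std.Irrefl (α := β) (· < ·)]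
    [LT γ] [Std.Irrefl (α := γ) (· < ·)] (u b : ℕ → List β) (r : ℕ → γ) (h : ℕ)
    (hu : ∀ i, 1 ≤ i → i ≤ h → u i = b i ++ u (i + 1))
    (hne : ∀ i, 1 ≤ i → i ≤ h → u i ≠ [])
    (hend : u (h + 1) = [])
    (heq : ∀ i j, 1 ≤ i → i ≤ h → 1 ≤ j → j ≤ h → r i = r j → b i = b j)
    (hlt : ∀ i j, 1 ≤ i → i ≤ h → 1 ≤ j → j ≤ h → r i ≠ r j → (u i < u j ↔ r i < r j))
    (i j : ℕ) (hi : 1 ≤ i) (hi' : i ≤ h + 1) (hj : 1 ≤ j) (hj' : j ≤ h + 1) :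
    u i < u j ↔ slice r i (h + 1) < slice r j (h + 1) := by
  rcases Nat.lt_or_ge h j with hjh | hjh
  · obtain rfl : j = h + 1 := by omega
    rw [hend, slice_eq_nil_iff.mpr le_rfl]
    exact iff_of_false (List.not_lt_nil _) (List.not_lt_nil _)
  rcases Nat.lt_or_ge h i with hih | hih
  · obtain rfl : i = h + 1 := by omega
    rw [hend, slice_eq_nil_iff.mpr le_rfl, List.nil_lt_iff_ne_nil, List.nil_lt_iff_ne_nil,
      Ne, Ne, slice_eq_nil_iff]
    exact iff_of_true (hne j hj hjh) (by omega)
  rw [slice_eq_cons (Nat.lt_succ_of_le hih), slice_eq_cons (Nat.lt_succ_of_le hjh)]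
  by_cases hr : r i = r j
  · rw [hu i hi hih, hu j hj hjh, heq i j hi hih hj hjh hr, hr, List.append_lt_append_left_iff,
      List.cons_lt_cons_self]
    exact lt_iff_slice_lt_of_blocks u b r h hu hne hend heq hlt (i + 1) (j + 1)
      (by omega) (by omega) (by omega) (by omega)
  · rw [hlt i j hi hih hj hjh hr, List.cons_lt_cons_iff_of_ne hr]
termination_by h + 1 - i

theorem ssa_of_blocks_general {α : Type*} [LinearOrder α] (S : ℕ → α)
    (n h : ℕ) (p : ℕ → ℕ) (rep : ℕ → List α)
    (hmono : StrictMonoOn p (Set.Icc 1 (h + 1)))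
    (hlast : p (h + 1) = n + 1)
    -- equal representative strings imply equal blocks
    (hrep_eq : ∀ i j, 1 ≤ i → i ≤ h → 1 ≤ j → j ≤ h → rep i = rep j →
      (List.range (p (i + 1) - p i)).map (fun t => S (p i + t)) =
        (List.range (p (j + 1) - p j)).map (fun t => S (p j + t)))
    -- distinct representatives order exactly as the corresponding suffixes
    (hrep_lt : ∀ i j, 1 ≤ i → i ≤ h → 1 ≤ j → j ≤ h → rep i ≠ rep j →
      (((List.range (n + 1 - p i)).map (fun t => S (p i + t)) <
          (List.range (n + 1 - p j)).map (fun t => S (p j + t))) ↔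
        rep i < rep j))
    (i j : ℕ) (hi : 1 ≤ i) (hi' : i ≤ h) (hj : 1 ≤ j) (hj' : j ≤ h) :
    ((List.range (n + 1 - p i)).map (fun t => S (p i + t)) <
        (List.range (n + 1 - p j)).map (fun t => S (p j + t))) ↔
      ((List.range (h + 1 - i)).map (fun m => rep (i + m)) <
        (List.range (h + 1 - j)).map (fun m => rep (j + m))) := by
  have hstep : ∀ k, 1 ≤ k → k ≤ h → p k < p (k + 1) := fun k hk hk' =>
    hmono ⟨hk, by omega⟩ ⟨by omega, by omega⟩ (by omega)
  have hbound : ∀ k, 1 ≤ k → k ≤ h → p (k + 1) ≤ n + 1 := fun k hk hk' =>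
    hlast ▸ hmono.monotoneOn ⟨by omega, by omega⟩ ⟨by omega, le_rfl⟩ (by omega)
  -- the words in the statement are `slice S (p k) (n + 1)`, `slice S (p k) (p (k + 1))` and
  -- `slice rep k (h + 1)` unfolded
  refine lt_iff_slice_lt_of_blocks (fun k => slice S (p k) (n + 1))
    (fun k => slice S (p k) (p (k + 1))) rep h (fun k hk hk' => ?_) (fun k hk hk' => ?_)
    ?_ hrep_eq hrep_lt i j hi (by omega) hj (by omega)
  · exact (slice_append (hstep k hk hk').le (hbound k hk hk')).symm
  · rw [Ne, slice_eq_nil_iff]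
    exact not_le.mpr ((hstep k hk hk').trans_le (hbound k hk hk'))
  · rw [hlast, slice_eq_nil_iff]

/-- Let `P = {p 1 < ... < p h}` (with sentinel `p (h+1) = n+1`) be a forward
synchronized `(τ,δ)`-partitioning set of `S`, and let each block
`[p i..p (i+1) - 1]` have a representative string `rep i` such that equal
representatives imply equal blocks and, for distinct representatives, the
lexicographic order of the representatives agrees with the lexicographic
order of the corresponding suffixes of `S`.  Let `S'_P` be the string whose
`i`-th character is (order isomorphic to) the rank of `rep i`; its suffix
starting at `i` is `rep i, rep (i+1), ..., rep h` compared lexicographically.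
Then for distinct `i, j`: `S[p i..n] < S[p j..n]` iff
`S'_P[i..h] < S'_P[j..h]`. -/
theorem ssa_of_blocks {α : Type*} [LinearOrder α] (S : ℕ → α)
    (n τ δ h : ℕ) (p : ℕ → ℕ) (rep : ℕ → List α)
    (hh : 1 ≤ h)
    (hmono : StrictMonoOn p (Set.Icc 1 (h + 1)))
    (hp1 : 1 ≤ p 1) (hlast : p (h + 1) = n + 1)
    (hP : PartitioningSet S n τ δ {x | ∃ i, 1 ≤ i ∧ i ≤ h ∧ x = p i})
    -- `P` is forward synchronized
    (hsync : ∀ i j, 1 ≤ i → i ≤ h → 1 ≤ j → j ≤ h →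
      (∀ k ≤ p (i + 1) - p i + δ, S (p i + k) = S (p j + k)) →
      p (i + 1) - p i = p (j + 1) - p j)
    -- equal representative strings imply equal blocks
    (hrep_eq : ∀ i j, 1 ≤ i → i ≤ h → 1 ≤ j → j ≤ h → rep i = rep j →
      (List.range (p (i + 1) - p i)).map (fun t => S (p i + t)) =
        (List.range (p (j + 1) - p j)).map (fun t => S (p j + t)))
    -- distinct representatives order exactly as the corresponding suffixes
    (hrep_lt : ∀ i j, 1 ≤ i → i ≤ h → 1 ≤ j → j ≤ h → rep i ≠ rep j →
      (((List.range (n + 1 - p i)).map (fun t => S (p i + t)) <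
          (List.range (n + 1 - p j)).map (fun t => S (p j + t))) ↔
        rep i < rep j))
    (i j : ℕ) (hi : 1 ≤ i) (hi' : i ≤ h) (hj : 1 ≤ j) (hj' : j ≤ h)
    (hij : i ≠ j) :
    ((List.range (n + 1 - p i)).map (fun t => S (p i + t)) <
        (List.range (n + 1 - p j)).map (fun t => S (p j + t))) ↔
      ((List.range (h + 1 - i)).map (fun m => rep (i + m)) <
        (List.range (h + 1 - j)).map (fun m => rep (j + m))) :=
  ssa_of_blocks_general S n h p rep hmono hlast hrep_eq hrep_lt i j hi hi' hj hj'
end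

section
/- With P a (τ', δ)-partitioning set (δ = c'·τ'·log* n, c' > 1) and Q ⊆ P defined via the token scheme (each block starting at p_i receives ⌈ℓ_{i-1}/τ'⌉ tokens and Q selects positions holding tokens with index ≡ 0 mod √(log* n) or index mod log* n < √(log* n)): if q_i < q_{i+1} are two consecutive positions in Q with q_{i+1} - q_i > 2δ, then S[q_i + δ .. q_{i+1} - 1] is a periodic string with period length at most τ'. -/
/-- The iterated logarithm `log* n`: the number of times `Nat.log 2` must be
applied to `n` before the result is at most `1`. -/
def logStar (n : ℕ) : ℕ :=
  if h : n ≤ 1 then 0 else logStar (Nat.log 2 n) + 1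
decreasing_by
  exact Nat.log_lt_self 2 (by omega)

/-- The total number of tokens assigned to the first `i` blocks: the block
starting at `p m` receives `⌈(p m - p (m-1))/τ'⌉` tokens (the ceiling of the
preceding block's length divided by `τ'`), and tokens are numbered
consecutively over the blocks in order. -/
def tokCum (τ' : ℕ) (p : ℕ → ℕ) (i : ℕ) : ℕ :=
  ∑ m ∈ Finset.Icc 1 i, (p m - p (m - 1) + τ' - 1) / τ'

/-- The set `Q` of positions `p i` whose block holds a token with index that
is a multiple of `√(log* n)` or whose index modulo `log* n` is less than
`√(log* n)`. -/
def tokenQ (n τ' h : ℕ) (p : ℕ → ℕ) : Set ℕ :=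
  {x | ∃ i, 1 ≤ i ∧ i ≤ h ∧ x = p i ∧
    ∃ t, tokCum τ' p (i - 1) < t ∧ t ≤ tokCum τ' p i ∧
      (t % Nat.sqrt (logStar n) = 0 ∨ t % logStar n < Nat.sqrt (logStar n))}

lemma ceil_mul_ge (τ x : ℕ) (hτ : 1 ≤ τ) : x ≤ ((x + τ - 1) / τ) * τ := by
  have h1 := Nat.div_add_mod (x + τ - 1) τ
  have h2 := Nat.mod_lt (x + τ - 1) (show 0 < τ by omega)
  have h3 : ((x + τ - 1) / τ) * τ = τ * ((x + τ - 1) / τ) := Nat.mul_comm _ _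
  omega

lemma tokCum_mono (τ' : ℕ) (p : ℕ → ℕ) {a b : ℕ} (hab : a ≤ b) :
    tokCum τ' p a ≤ tokCum τ' p b :=
  Finset.sum_le_sum_of_subset (Finset.Icc_subset_Icc_right hab)

lemma tokCum_succ (τ' : ℕ) (p : ℕ → ℕ) (b : ℕ) :
    tokCum τ' p (b + 1) = tokCum τ' p b + (p (b + 1) - p b + τ' - 1) / τ' := by
  unfold tokCum
  rw [Finset.sum_Icc_succ_top (show 1 ≤ b + 1 by omega)]
  simp

lemma tokCum_count (τ' : ℕ) (p : ℕ → ℕ) (hτ : 1 ≤ τ') (a : ℕ) :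
    ∀ b, a ≤ b → tokCum τ' p a * τ' + p b ≤ tokCum τ' p b * τ' + p a := by
  intro b hb
  induction b, hb using Nat.le_induction with
  | base => omega
  | succ b hb ih =>
    have hc := ceil_mul_ge τ' (p (b + 1) - p b) hτ
    have hs : tokCum τ' p (b + 1) * τ'
        = tokCum τ' p b * τ' + ((p (b + 1) - p b + τ' - 1) / τ') * τ' := by
      rw [tokCum_succ τ' p b]; ring
    omega

lemma exists_multiple (L a : ℕ) (hL : 1 ≤ L) :
    ∃ t, t % L = 0 ∧ a < t ∧ t ≤ a + L := by
  refine ⟨(a / L + 1) * L, Nat.mul_mod_left _ _, ?_, ?_⟩ <;>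
  · have h1 := Nat.div_add_mod a L
    have h2 := Nat.mod_lt a (show 0 < L by omega)
    have h3 : (a / L + 1) * L = L * (a / L) + L := by ring
    omega

/-- Let `P = {p 1 < ... < p h}` be a `(τ', δ)`-partitioning set of `S` with
`δ = c'·τ'·log* n` (`c' > 1`), and let `Q ⊆ P` be defined via the token
scheme: the block starting at `p i` receives `⌈(p i - p (i-1))/τ'⌉` tokens,
and `Q` selects positions holding a token whose index is a multiple of
`√(log* n)` or lies in `[0, √(log* n))` modulo `log* n`.  If `q < q'` are
two consecutive positions of `Q` with `q' - q > 2δ`, then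
`S[q + δ..q' - 1]` is periodic with period length at most `τ'`. -/
theorem tokenQ_gap_periodic {α : Type*} (S : ℕ → α) (n τ' δ c' h : ℕ)
    (p : ℕ → ℕ)
    (hc' : 1 < c') (hδ : δ = c' * τ' * logStar n)
    (hp0 : p 0 = 1) (hp01 : p 0 ≤ p 1) (hlast : p (h + 1) = n + 1)
    (hmono : ∀ i, 1 ≤ i → i ≤ h → p i < p (i + 1))
    (hP : PartitioningSet S n τ' δ {x | ∃ i, 1 ≤ i ∧ i ≤ h ∧ x = p i})
    (q q' : ℕ) (hcons : ConsecIn (tokenQ n τ' h p) q q')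
    (hgap : 2 * δ < q' - q) :
    ∃ ρ, 1 ≤ ρ ∧ ρ ≤ τ' ∧ HasPeriodOn S (q + δ) (q' - 1) ρ := by
  obtain ⟨hqQ, hq'Q, hqlt, hbetween⟩ := hcons
  obtain ⟨i, hi1, hih, hqi, -⟩ := hqQ
  obtain ⟨i', hi'1, hi'h, hq'i', -⟩ := hq'Q
  have hτ1 : 1 ≤ τ' := hP.one_le_τ
  have hτδ : τ' ≤ δ := hP.τ_le_δ
  have hL1 : 1 ≤ logStar n := by
    by_contra hc
    have h0 : logStar n = 0 := by omega
    rw [h0, Nat.mul_zero] at hδ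
    omega
  -- monotonicity of p on [0, h+1]
  have pmono : ∀ a b, a ≤ b → b ≤ h + 1 → p a ≤ p b := by
    intro a b hab hbh
    induction b, hab using Nat.le_induction with
    | base => exact le_refl _
    | succ b hb ih =>
      have h1 : p a ≤ p b := ih (by omega)
      have h2 : p b ≤ p (b + 1) := by
        rcases Nat.eq_zero_or_pos b with h0 | h0
        · rw [h0]; exact hp01
        · exact le_of_lt (hmono b h0 (by omega))
      omega
  have pstrict : ∀ a b, 1 ≤ a → a < b → b ≤ h + 1 → p a < p b := by
    intro a b ha hab hbh
    have h1 : p a < p (a + 1) := hmono a ha (by omega)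
    have h2 : p (a + 1) ≤ p b := pmono (a + 1) b (by omega) hbh
    omega
  have hii' : i < i' := by
    by_contra hc
    push_neg at hc
    have : p i' ≤ p i := pmono i' i hc (by omega)
    omega
  have hq'δ : q + δ < q' := by omega
  -- j = greatest index ≤ i' with p j ≤ q + δ
  set j := Nat.findGreatest (fun m => p m ≤ q + δ) i' with hj
  have hij : i ≤ j := Nat.le_findGreatest (P := fun m => p m ≤ q + δ)
    (le_of_lt hii') (show p i ≤ q + δ by omega)
  have hji' : j ≤ i' := Nat.findGreatest_le i'
  have hpj : p j ≤ q + δ := by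
    have := Nat.findGreatest_spec (P := fun m => p m ≤ q + δ)
      (le_of_lt hii') (show p i ≤ q + δ by omega)
    rw [← hj] at this
    exact this
  have hjlt : j < i' := by
    rcases lt_or_eq_of_le hji' with hlt | heq
    · exact hlt
    · exfalso; rw [heq] at hpj; omega
  have hpj1 : q + δ < p (j + 1) := by
    have := Nat.findGreatest_is_greatest (P := fun m => p m ≤ q + δ)
      (show j < j + 1 by omega) (by omega)
    omega
  -- key claim: p (j+1) ≥ q'
  have hkey : q' ≤ p (j + 1) := by
    by_contra hc
    push_neg at hc
    have hcount := tokCum_count τ' p hτ1 i (j + 1) (by omega)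
    have hδ2 : 2 * (τ' * logStar n) ≤ δ := by
      rw [hδ]
      calc 2 * (τ' * logStar n) ≤ c' * (τ' * logStar n) :=
            Nat.mul_le_mul_right _ hc'
        _ = c' * τ' * logStar n := by ring
    have hDge : tokCum τ' p i + logStar n ≤ tokCum τ' p (j + 1) := by
      by_contra hD
      push_neg at hD
      have h1 : tokCum τ' p (j + 1) * τ' ≤ (tokCum τ' p i + logStar n) * τ' :=
        Nat.mul_le_mul_right _ (by omega)
      have h2 : (tokCum τ' p i + logStar n) * τ'
          = tokCum τ' p i * τ' + τ' * logStar n := by ring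
      have h4 : 1 ≤ τ' * logStar n :=
        Nat.one_le_iff_ne_zero.mpr (Nat.mul_ne_zero (by omega) (by omega))
      omega
    obtain ⟨t, hmod, ht1, ht2'⟩ := exists_multiple (logStar n) (tokCum τ' p i) hL1
    have ht2 : t ≤ tokCum τ' p (j + 1) := by omega
    -- find the block containing token t
    have hex : ∃ m, t ≤ tokCum τ' p m := ⟨j + 1, ht2⟩
    have hfind : t ≤ tokCum τ' p (Nat.find hex) := Nat.find_spec hex
    have hm₀le : Nat.find hex ≤ j + 1 := Nat.find_min' hex ht2
    have hm₀gt : i < Nat.find hex := by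
      by_contra hc2
      push_neg at hc2
      have := tokCum_mono τ' p hc2
      omega
    have hprev : tokCum τ' p (Nat.find hex - 1) < t := by
      have h1 : Nat.find hex - 1 < Nat.find hex := by omega
      have := Nat.find_min hex h1
      omega
    have hmem : p (Nat.find hex) ∈ tokenQ n τ' h p := by
      refine ⟨Nat.find hex, by omega, by omega, rfl, t, hprev, hfind, Or.inr ?_⟩
      rw [hmod]
      exact Nat.sqrt_pos.mpr (by omega)
    refine hbetween (p (Nat.find hex)) hmem ⟨?_, ?_⟩
    · rw [hqi]
      exact pstrict i (Nat.find hex) hi1 hm₀gt (by omega)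
    · have : p (Nat.find hex) ≤ p (j + 1) := pmono (Nat.find hex) (j + 1) hm₀le (by omega)
      omega
  -- p j and p (j+1) are consecutive in P ∪ {1, n+1}
  have hmemj : p j ∈ {x | ∃ i, 1 ≤ i ∧ i ≤ h ∧ x = p i} ∪ {1, n + 1} :=
    Set.mem_union_left _ ⟨j, by omega, by omega, rfl⟩
  have hmemj1 : p (j + 1) ∈ {x | ∃ i, 1 ≤ i ∧ i ≤ h ∧ x = p i} ∪ {1, n + 1} :=
    Set.mem_union_left _ ⟨j + 1, by omega, by omega, rfl⟩
  have hplt : p j < p (j + 1) := pstrict j (j + 1) (by omega) (by omega) (by omega)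
  have hnone : ∀ r ∈ {x | ∃ i, 1 ≤ i ∧ i ≤ h ∧ x = p i} ∪ {1, n + 1},
      ¬(p j < r ∧ r < p (j + 1)) := by
    rintro r (⟨m, hm1, hmh, rfl⟩ | hr)
    · rintro ⟨hr1, hr2⟩
      rcases le_or_gt m j with hle | hlt
      · have := pmono m j hle (by omega); omega
      · have := pmono (j + 1) m hlt (by omega); omega
    · simp only [Set.mem_insert_iff, Set.mem_singleton_iff] at hr
      rintro ⟨hr1, hr2⟩
      rcases hr with h1 | h1
      · have := pmono 0 j (by omega) (by omega)
        omega
      · have := pmono (j + 1) (h + 1) (by omega) (le_refl _)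
        rw [hlast] at this
        omega
  rcases hP.compactness (p j) (p (j + 1)) hmemj hmemj1 hplt hnone with hsmall | ⟨ρ, hρ1, hρτ, hper⟩
  · omega
  · exact ⟨ρ, hρ1, hρτ, fun k hk1 hk2 => hper k (by omega) (by omega)⟩
end
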